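/- Let X ⊆ ℝⁿ be closed and convex with nonempty complement, let ‖·‖_M be the weighted norm with closed balls B̄_ρ := {z : ‖z‖_M ≤ ρ}, let a ≤ b be real numbers, and let r : [a, b] → (0, ∞) be nondecreasing with X ⊖ B̄_{r(s)} nonempty for all s ∈ [a, b]; write X_s := X ⊖ B̄_{r(s)} and d_A(y) := infDist(y, A) − infDist(y, Aᶜ). Let x̃ : [a, b] → ℝⁿ be continuous. If the prediction satisfies the tightened constraint at the left mesh point, d_{X_a}(x̃(a)) ≤ −(max_{s∈[a,b]} ‖x̃(s) − x̃(a)‖_M + r(b) − r(a)), then d_{X_s}(x̃(s)) ≤ 0 for all s ∈ [a, b]; in particular d_{X_b}(x̃(b)) ≤ 0. -/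
import Mathlib


open Set

/-- The weighted norm `‖z‖_M = ∑ i, M i * |z i|` associated with the positive diagonal
weighting `M`. -/
noncomputable def wnorm {n : ℕ} (M : Fin n → ℝ) (z : Fin n → ℝ) : ℝ :=
  ∑ i, M i * |z i|

/-- The Pontryagin difference `X ⊖ B̄_ρ` of a set `X ⊆ ℝⁿ` and the closed `‖·‖_M`-ball of
radius `ρ`: `{a | ∀ b, ‖b‖_M ≤ ρ → a + b ∈ X}`. -/
def pontryaginDiffBall {n : ℕ} (M : Fin n → ℝ) (X : Set (Fin n → ℝ)) (ρ : ℝ) :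
    Set (Fin n → ℝ) :=
  {a | ∀ b : Fin n → ℝ, wnorm M b ≤ ρ → a + b ∈ X}

/-- The distance (in the weighted norm `‖·‖_M`) from a point `y` to a set `S`:
`infDist(y, S) = inf_{z ∈ S} ‖y - z‖_M` (with the convention `inf ∅ = 0` via `sInf`). -/
noncomputable def winfDist {n : ℕ} (M : Fin n → ℝ) (y : Fin n → ℝ)
    (S : Set (Fin n → ℝ)) : ℝ :=
  sInf ((fun z => wnorm M (y - z)) '' S)

/-- The signed distance `d_A(y) = infDist(y, A) - infDist(y, Aᶜ)` w.r.t. `‖·‖_M`. -/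
noncomputable def wsdist {n : ℕ} (M : Fin n → ℝ) (y : Fin n → ℝ)
    (A : Set (Fin n → ℝ)) : ℝ :=
  winfDist M y A - winfDist M y Aᶜ

section aux
variable {n : ℕ} {M : Fin n → ℝ}

lemma wnorm_nonneg (hM : ∀ i, 0 < M i) (z : Fin n → ℝ) : 0 ≤ wnorm M z :=
  Finset.sum_nonneg fun i _ => mul_nonneg (hM i).le (abs_nonneg _)

lemma wnorm_add_le (hM : ∀ i, 0 < M i) (y z : Fin n → ℝ) :
    wnorm M (y + z) ≤ wnorm M y + wnorm M z := by
  unfold wnorm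
  rw [← Finset.sum_add_distrib]
  refine Finset.sum_le_sum fun i _ => ?_
  rw [← mul_add]
  exact mul_le_mul_of_nonneg_left (abs_add_le _ _) (hM i).le

lemma wnorm_smul (t : ℝ) (z : Fin n → ℝ) : wnorm M (t • z) = |t| * wnorm M z := by
  unfold wnorm
  rw [Finset.mul_sum]
  refine Finset.sum_congr rfl fun i _ => ?_
  simp [abs_mul]
  ring

lemma wnorm_neg (z : Fin n → ℝ) : wnorm M (-z) = wnorm M z := by
  simp [wnorm]

lemma eq_zero_of_wnorm_le_zero (hM : ∀ i, 0 < M i) {z : Fin n → ℝ}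
    (h : wnorm M z ≤ 0) : z = 0 := by
  have h0 : wnorm M z = 0 := le_antisymm h (wnorm_nonneg hM z)
  funext i
  have := (Finset.sum_eq_zero_iff_of_nonneg
    (fun i _ => mul_nonneg (hM i).le (abs_nonneg (z i)))).mp h0 i (Finset.mem_univ i)
  have : |z i| = 0 := by
    rcases mul_eq_zero.mp this with h | h
    · exact absurd h (hM i).ne'
    · exact h
  simpa using abs_eq_zero.mp this

lemma winfDist_bddBelow (hM : ∀ i, 0 < M i) (y : Fin n → ℝ) (S : Set (Fin n → ℝ)) :
    BddBelow ((fun z => wnorm M (y - z)) '' S) := by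
  refine ⟨0, fun x hx => ?_⟩
  obtain ⟨z, _, rfl⟩ := hx
  exact wnorm_nonneg hM _

lemma winfDist_nonneg (hM : ∀ i, 0 < M i) (y : Fin n → ℝ) (S : Set (Fin n → ℝ)) :
    0 ≤ winfDist M y S :=
  Real.sInf_nonneg (fun x hx => by obtain ⟨z, _, rfl⟩ := hx; exact wnorm_nonneg hM _)

lemma winfDist_le (hM : ∀ i, 0 < M i) {y z : Fin n → ℝ} {S : Set (Fin n → ℝ)}
    (hz : z ∈ S) : winfDist M y S ≤ wnorm M (y - z) :=
  csInf_le (winfDist_bddBelow hM y S) ⟨z, hz, rfl⟩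

lemma isClosed_pdb {X : Set (Fin n → ℝ)} (hXcl : IsClosed X) (ρ : ℝ) :
    IsClosed (pontryaginDiffBall M X ρ) := by
  have h : pontryaginDiffBall M X ρ =
      ⋂ (v : Fin n → ℝ) (_ : wnorm M v ≤ ρ), (· + v) ⁻¹' X := by
    ext a; simp [pontryaginDiffBall]
  rw [h]
  exact isClosed_iInter fun v => isClosed_iInter fun _ =>
    hXcl.preimage (continuous_id.add continuous_const)

lemma mem_of_winfDist_le_zero (hM : ∀ i, 0 < M i) {y : Fin n → ℝ}
    {S : Set (Fin n → ℝ)} (hScl : IsClosed S) (hSne : S.Nonempty)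
    (h : winfDist M y S ≤ 0) : y ∈ S := by
  obtain ⟨z0, hz0⟩ := hSne
  by_contra hy
  rcases isEmpty_or_nonempty (Fin n) with hn | hn
  · exact hy ((show y = z0 from funext fun i => hn.elim i) ▸ hz0)
  obtain ⟨ε, hε, hball⟩ := Metric.isOpen_iff.mp hScl.isOpen_compl y hy
  set m : ℝ := Finset.univ.inf' (Finset.univ_nonempty) M with hmdef
  have hm : 0 < m := (Finset.lt_inf'_iff _).mpr fun i _ => hM i
  have hlow : ∀ x ∈ (fun z => wnorm M (y - z)) '' S, m * (ε / 2) ≤ x := by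
    rintro x ⟨z, hz, rfl⟩
    have hzball : z ∉ Metric.ball y ε := fun hmem => (hball hmem) hz
    have hdist : ε ≤ dist y z := by
      rw [dist_comm]
      simpa [Metric.mem_ball] using hzball
    have : ∃ i, ε / 2 ≤ dist (y i) (z i) := by
      by_contra hc
      push_neg at hc
      have : dist y z < ε := lt_of_lt_of_le
        ((dist_pi_lt_iff (by linarith)).mpr fun i => hc i) (by linarith)
      linarith
    obtain ⟨i, hi⟩ := this
    have h1 : m * (ε / 2) ≤ M i * |y i - z i| := by
      have : dist (y i) (z i) = |y i - z i| := Real.dist_eq _ _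
      have hMi : m ≤ M i := Finset.inf'_le _ (Finset.mem_univ i)
      calc m * (ε / 2) ≤ M i * (ε / 2) :=
            mul_le_mul_of_nonneg_right hMi (by linarith)
        _ ≤ M i * |y i - z i| := by
            apply mul_le_mul_of_nonneg_left _ (hM i).le
            rw [← this]; exact hi
    calc m * (ε / 2) ≤ M i * |y i - z i| := h1
      _ ≤ wnorm M (y - z) := by
          refine Finset.single_le_sum (f := fun j => M j * |(y - z) j|)
            (fun j _ => mul_nonneg (hM j).le (abs_nonneg _)) (Finset.mem_univ i)
  have : m * (ε / 2) ≤ winfDist M y S :=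
    le_csInf ⟨_, ⟨z0, hz0, rfl⟩⟩ hlow
  nlinarith

end aux

/-- **Per-segment constraint tightening guarantee.**
Let `X ⊆ ℝⁿ` be closed and convex with nonempty complement, let `r` be a positive
nondecreasing tightening radius on `[a, b]` with each tightened set
`X_s = X ⊖ B̄_{r s}` nonempty, and let `x̃` be continuous on `[a, b]`.  If the prediction
satisfies the tightened constraint at the left mesh point,
`d_{X_a}(x̃ a) ≤ -(max_{s ∈ [a,b]} ‖x̃ s - x̃ a‖_M + r b - r a)`,
then `d_{X_s}(x̃ s) ≤ 0` for all `s ∈ [a, b]`; in particular `d_{X_b}(x̃ b) ≤ 0`. -/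
theorem per_segment_constraint_tightening
    (n : ℕ) (M : Fin n → ℝ) (hM : ∀ i, 0 < M i)
    (X : Set (Fin n → ℝ)) (hXcl : IsClosed X) (hXconv : Convex ℝ X) (hXc : Xᶜ.Nonempty)
    (a b : ℝ) (hab : a ≤ b)
    (r : ℝ → ℝ) (hrpos : ∀ s ∈ Icc a b, 0 < r s) (hrmono : MonotoneOn r (Icc a b))
    (hXs : ∀ s ∈ Icc a b, (pontryaginDiffBall M X (r s)).Nonempty)
    (xt : ℝ → Fin n → ℝ)
    (hxtc : ∀ i, ContinuousOn (fun t => xt t i) (Icc a b))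
    (hdisc : wsdist M (xt a) (pontryaginDiffBall M X (r a)) ≤
      -(sSup ((fun s => wnorm M (xt s - xt a)) '' Icc a b) + (r b - r a))) :
    (∀ s ∈ Icc a b, wsdist M (xt s) (pontryaginDiffBall M X (r s)) ≤ 0) ∧
      wsdist M (xt b) (pontryaginDiffBall M X (r b)) ≤ 0 := by
  have haI : a ∈ Icc a b := ⟨le_refl a, hab⟩
  have hbI : b ∈ Icc a b := ⟨hab, le_refl b⟩
  set K := sSup ((fun s => wnorm M (xt s - xt a)) '' Icc a b) with hKdef
  have hcont : ContinuousOn (fun s => wnorm M (xt s - xt a)) (Icc a b) := by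
    have h : (fun s => wnorm M (xt s - xt a)) = fun s => ∑ i, M i * |xt s i - xt a i| := by
      funext s; simp [wnorm]
    rw [h]
    exact continuousOn_finset_sum _ fun i _ =>
      continuousOn_const.mul ((hxtc i).sub continuousOn_const).abs
  have hKmem : ∀ s ∈ Icc a b, wnorm M (xt s - xt a) ≤ K := fun s hs =>
    le_csSup (isCompact_Icc.bddAbove_image hcont) ⟨s, hs, rfl⟩
  have hK0 : 0 ≤ K := by
    have := hKmem a haI
    simpa [wnorm, sub_self] using this
  have hdisc' : winfDist M (xt a) (pontryaginDiffBall M X (r a)) + (K + (r b - r a)) ≤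
      winfDist M (xt a) (pontryaginDiffBall M X (r a))ᶜ := by
    have h := hdisc
    simp only [wsdist] at h
    linarith
  set D := winfDist M (xt a) (pontryaginDiffBall M X (r a))ᶜ with hDdef
  have hwA : 0 ≤ winfDist M (xt a) (pontryaginDiffBall M X (r a)) := winfDist_nonneg hM _ _
  have hin : ∀ v' : Fin n → ℝ, wnorm M v' < D →
      xt a + v' ∈ pontryaginDiffBall M X (r a) := by
    intro v' hv'
    by_contra hmem
    have hle : D ≤ wnorm M (xt a - (xt a + v')) := winfDist_le hM hmem
    rw [show xt a - (xt a + v') = -v' by abel, wnorm_neg] at hle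
    linarith
  have key : ∀ s ∈ Icc a b, xt s ∈ pontryaginDiffBall M X (r s) := by
    intro s hs w hw
    have hra : 0 < r a := hrpos a haI
    have hrs : 0 < r s := hrpos s hs
    have hras : r a ≤ r s := hrmono haI hs hs.1
    have hrsb : r s ≤ r b := hrmono hs hbI hs.2
    set c : ℝ := r a / r s with hc
    have hc0 : 0 ≤ c := div_nonneg hra.le hrs.le
    have hc1 : c ≤ 1 := (div_le_one hrs).mpr hras
    set u : Fin n → ℝ := c • w with hu
    set v : Fin n → ℝ := (xt s - xt a) + (w - u) with hv
    have hun : wnorm M u ≤ r a := by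
      rw [hu, wnorm_smul, abs_of_nonneg hc0]
      calc c * wnorm M w ≤ c * r s := mul_le_mul_of_nonneg_left hw hc0
        _ = r a := by rw [hc, div_mul_cancel₀ _ hrs.ne']
    have hwnonneg : 0 ≤ wnorm M w := wnorm_nonneg hM w
    have hvn : wnorm M v ≤ K + (r b - r a) := by
      have hwu : w - u = (1 - c) • w := by rw [hu, sub_smul, one_smul]
      have h1 : wnorm M (w - u) ≤ r s - r a := by
        rw [hwu, wnorm_smul, abs_of_nonneg (by linarith)]
        calc (1 - c) * wnorm M w ≤ (1 - c) * r s :=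
              mul_le_mul_of_nonneg_left hw (by linarith)
          _ = r s - r a := by rw [sub_mul, one_mul, hc, div_mul_cancel₀ _ hrs.ne']
      calc wnorm M v ≤ wnorm M (xt s - xt a) + wnorm M (w - u) := wnorm_add_le hM _ _
        _ ≤ K + (r s - r a) := add_le_add (hKmem s hs) h1
        _ ≤ K + (r b - r a) := by linarith
    have heq : xt a + v + u = xt s + w := by rw [hv]; abel
    rcases lt_or_ge (wnorm M v) D with hlt | hge
    · have hXamem := hin v hlt
      have hXmem := hXamem u hun
      rwa [heq] at hXmem
    · have hD0 : 0 ≤ D := winfDist_nonneg hM _ _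
      have hwA0 : winfDist M (xt a) (pontryaginDiffBall M X (r a)) ≤ 0 := by linarith
      have hxaXa : xt a ∈ pontryaginDiffBall M X (r a) :=
        mem_of_winfDist_le_zero hM (isClosed_pdb hXcl _) (hXs a haI) hwA0
      rcases eq_or_lt_of_le hD0 with hDz | hDpos
      · -- D = 0 : then K + (r b - r a) = 0 and v = 0
        have hv0 : v = 0 := eq_zero_of_wnorm_le_zero hM (by linarith)
        have h2 : xt s + w = xt a + u := by rw [← heq, hv0]; abel
        rw [h2]
        exact hxaXa u hun
      · have h3 : Filter.Tendsto (fun t : ℝ => xt a + t • v + u)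
            (nhdsWithin 1 (Iio 1)) (nhds (xt a + (1:ℝ) • v + u)) :=
          (((continuous_const.add (continuous_id.smul continuous_const)).add
            continuous_const).tendsto 1).mono_left nhdsWithin_le_nhds
        rw [one_smul] at h3
        have hvD : wnorm M v ≤ D := by linarith
        have hev : ∀ᶠ t in nhdsWithin (1:ℝ) (Iio 1), (xt a + t • v + u) ∈ X := by
          filter_upwards [Ioo_mem_nhdsLT_of_mem
            (show (1:ℝ) ∈ Ioc (0:ℝ) 1 from ⟨zero_lt_one, le_refl 1⟩)] with t ht
          have h4 : wnorm M (t • v) < D := by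
            rw [wnorm_smul, abs_of_nonneg ht.1.le]
            have h5 : t * wnorm M v ≤ t * D := mul_le_mul_of_nonneg_left hvD ht.1.le
            have h6 : t * D < 1 * D := mul_lt_mul_of_pos_right ht.2 hDpos
            linarith
          exact hin (t • v) h4 u hun
        have hmemX := hXcl.mem_of_tendsto h3 hev
        rwa [heq] at hmemX
  have final : ∀ s ∈ Icc a b, wsdist M (xt s) (pontryaginDiffBall M X (r s)) ≤ 0 := by
    intro s hs
    have h1 : winfDist M (xt s) (pontryaginDiffBall M X (r s)) ≤ 0 := by
      have := winfDist_le hM (y := xt s) (key s hs)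
      simpa [wnorm, sub_self] using this
    have h2 : 0 ≤ winfDist M (xt s) (pontryaginDiffBall M X (r s))ᶜ :=
      winfDist_nonneg hM _ _
    simp only [wsdist]
    linarith
  exact ⟨final, final b hbI⟩
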